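/- Let A, η ∈ C²(ℝ) be strictly convex with entropy flux q, q' = η'A'. If u_R ≤ u ≤ u_L and η(u|u_R) ≠ η(u|u_L), then (q(u;u_R) - q(u;u_L))/|η(u|u_R) - η(u|u_L)| < A'(u)·sgn(η(u|u_R) - η(u|u_L)). -/

import Mathlib

/-!
With `u` fixed, put `Φ(v) = A'(u) η(u|v) - q(u;v)`. Using `q' = η'A'`,
`Φ'(v) = η''(v) (A(u) - A(v) - A'(u)(u - v))`: a nonnegative factor times a
tangent-line defect of `A` that is negative for `v ≠ u`. So `Φ` is antitone and
`Φ(uL) ≤ Φ(uR)`, which is the claim up to strictness. If equality held, `Φ'` would vanish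
on `(uR, uL)`, forcing `η'' = 0` there away from `u`; but `∂ᵥ η(u|v) = -η''(v)(u - v)`,
so `η(u|·)` would be constant on `[uR, uL]`, contradicting `η(u|uR) ≠ η(u|uL)`.
-/

open Set

noncomputable section

def relEntropy (η : ℝ → ℝ) (a b : ℝ) : ℝ :=
  η a - η b - deriv η b * (a - b)

def relEntropyFlux (η q A : ℝ → ℝ) (a b : ℝ) : ℝ :=
  q a - q b - deriv η b * (A a - A b)

end

lemma Antitone.deriv_eq_zero_of_eq {f : ℝ → ℝ} (hf : Antitone f) {a b c : ℝ}
    (hc : c ∈ Ioo a b) (hab : f a = f b) : deriv f c = 0 := by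
  have hconst : f =ᶠ[nhds c] fun _ => f a := by
    filter_upwards [Icc_mem_nhds hc.1 hc.2] with x hx
    exact le_antisymm (hf hx.1) (hab ▸ hf hx.2)
  rw [hconst.deriv_eq, deriv_const]

lemma Antitone.lt_of_deriv_eq_zero_imp {f g : ℝ → ℝ} (hf : Antitone f)
    (hg : Differentiable ℝ g) {a b : ℝ} (hab : a ≤ b) (hgab : g a ≠ g b)
    (hfg : ∀ x ∈ Ioo a b, deriv f x = 0 → deriv g x = 0) : f b < f a := by
  refine (hf hab).lt_of_ne fun hfab => hgab ?_
  have hlt : a < b := hab.lt_of_ne fun h => hgab (h ▸ rfl)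
  obtain ⟨c, hc, hgc⟩ := exists_deriv_eq_slope g hlt hg.continuous.continuousOn
    hg.differentiableOn
  have hslope : (g b - g a) / (b - a) = 0 :=
    hgc ▸ hfg c hc (hf.deriv_eq_zero_of_eq hc hfab.symm)
  rw [div_eq_zero_iff, sub_eq_zero, sub_eq_zero] at hslope
  exact hslope.elim Eq.symm fun h => absurd h hlt.ne'

lemma StrictConvexOn.add_deriv_mul_sub_lt {f : ℝ → ℝ} (hf : StrictConvexOn ℝ univ f)
    {x y : ℝ} (hfx : DifferentiableAt ℝ f x) (hxy : y ≠ x) :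
    f x + deriv f x * (y - x) < f y := by
  rcases hxy.lt_or_gt with hlt | hgt
  · have h := hf.slope_lt_deriv (mem_univ y) (mem_univ x) hlt hfx
    rw [slope_def_field, div_lt_iff₀ (sub_pos.2 hlt)] at h
    linarith
  · have h := hf.deriv_lt_slope (mem_univ x) (mem_univ y) hgt hfx
    rw [slope_def_field, lt_div_iff₀ (sub_pos.2 hgt)] at h
    linarith

lemma div_abs_lt_mul_sign_of_lt {x c d : ℝ} (hd : d ≠ 0) (h : x < c * d) :
    x / |d| < c * Real.sign d := by
  rcases hd.lt_or_gt with hneg | hpos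
  · rw [abs_of_neg hneg, Real.sign_of_neg hneg, div_lt_iff₀ (neg_pos.2 hneg)]
    linarith
  · rw [abs_of_pos hpos, Real.sign_of_pos hpos, div_lt_iff₀ hpos]
    linarith

section RelativeEntropy

variable {η q A : ℝ → ℝ} {u v : ℝ}

lemma hasDerivAt_relEntropy (hη : DifferentiableAt ℝ η v)
    (hη' : DifferentiableAt ℝ (deriv η) v) :
    HasDerivAt (relEntropy η u) (-(deriv (deriv η) v * (u - v))) v := by
  have h := ((hη.hasDerivAt.const_sub (η u)).sub
    (hη'.hasDerivAt.mul ((hasDerivAt_id v).const_sub u)))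
  exact h.congr_deriv (by simp)

lemma hasDerivAt_relEntropyFlux (hq : HasDerivAt q (deriv η v * deriv A v) v)
    (hA : DifferentiableAt ℝ A v) (hη' : DifferentiableAt ℝ (deriv η) v) :
    HasDerivAt (relEntropyFlux η q A u) (-(deriv (deriv η) v * (A u - A v))) v := by
  have h := (hq.const_sub (q u)).sub (hη'.hasDerivAt.mul (hA.hasDerivAt.const_sub (A u)))
  exact h.congr_deriv (by ring)

lemma hasDerivAt_mul_relEntropy_sub_relEntropyFlux (c : ℝ)
    (hq : HasDerivAt q (deriv η v * deriv A v) v) (hA : DifferentiableAt ℝ A v)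
    (hη : DifferentiableAt ℝ η v) (hη' : DifferentiableAt ℝ (deriv η) v) :
    HasDerivAt (fun w => c * relEntropy η u w - relEntropyFlux η q A u w)
      (deriv (deriv η) v * (A u - A v - c * (u - v))) v :=
  (((hasDerivAt_relEntropy hη hη').const_mul c).sub
    (hasDerivAt_relEntropyFlux hq hA hη')).congr_deriv (by ring)

end RelativeEntropy

theorem stmt_11 (A η q : ℝ → ℝ)
    (hA : ContDiff ℝ 2 A) (hAc : StrictConvexOn ℝ Set.univ A)
    (hη : ContDiff ℝ 2 η) (hηc : StrictConvexOn ℝ Set.univ η)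
    (hqd : Differentiable ℝ q)
    (hq : ∀ u, deriv q u = deriv η u * deriv A u)
    (u uL uR : ℝ) (h1 : uR ≤ u) (h2 : u ≤ uL)
    (hne : (η u - η uR - deriv η uR * (u - uR)) -
        (η u - η uL - deriv η uL * (u - uL)) ≠ 0) :
    ((q u - q uR - deriv η uR * (A u - A uR)) -
        (q u - q uL - deriv η uL * (A u - A uL))) /
      |(η u - η uR - deriv η uR * (u - uR)) -
        (η u - η uL - deriv η uL * (u - uL))| <
      deriv A u *
        Real.sign ((η u - η uR - deriv η uR * (u - uR)) -
          (η u - η uL - deriv η uL * (u - uL))) := by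
  have hAd : Differentiable ℝ A := hA.differentiable two_ne_zero
  have hηd : Differentiable ℝ η := hη.differentiable two_ne_zero
  have hη'd : Differentiable ℝ (deriv η) := hη.differentiable_deriv_two
  have hη'' : ∀ v, 0 ≤ deriv (deriv η) v := fun v =>
    (monotoneOn_univ.1 (hηc.convexOn.monotoneOn_deriv fun x _ => hηd x)).deriv_nonneg
  have hdefect : ∀ v, v ≠ u → A u - A v - deriv A u * (u - v) < 0 := fun v hvu => by
    linarith [hAc.add_deriv_mul_sub_lt (hAd u) hvu]
  set Φ : ℝ → ℝ := fun v => deriv A u * relEntropy η u v - relEntropyFlux η q A u v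
  have hΦ : ∀ v, HasDerivAt Φ (deriv (deriv η) v * (A u - A v - deriv A u * (u - v))) v :=
    fun v => hasDerivAt_mul_relEntropy_sub_relEntropyFlux _ (hq v ▸ (hqd v).hasDerivAt)
      (hAd v) (hηd v) (hη'd v)
  have hΦanti : Antitone Φ := by
    refine antitone_of_deriv_nonpos (fun v => (hΦ v).differentiableAt) fun v => ?_
    rw [(hΦ v).deriv]
    refine mul_nonpos_of_nonneg_of_nonpos (hη'' v) ?_
    rcases eq_or_ne v u with rfl | hvu
    · simp
    · exact (hdefect v hvu).le
  have hΦlt : Φ uL < Φ uR := by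
    refine hΦanti.lt_of_deriv_eq_zero_imp
      (fun v => (hasDerivAt_relEntropy (hηd v) (hη'd v)).differentiableAt)
      (h1.trans h2) (sub_ne_zero.1 hne) fun v _ hΦv => ?_
    rw [(hΦ v).deriv] at hΦv
    rw [(hasDerivAt_relEntropy (hηd v) (hη'd v)).deriv]
    rcases eq_or_ne v u with rfl | hvu
    · simp
    · simp [(mul_eq_zero.1 hΦv).resolve_right (hdefect v hvu).ne]
  refine div_abs_lt_mul_sign_of_lt hne ?_
  simp only [Φ, relEntropy, relEntropyFlux] at hΦlt
  linarith
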